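/- arXiv:1411.2217 — 4 statements merged into one kernel-verified Lean document; each statement's English description precedes it below -/
import Mathlib

section
/- Let X be an infinite-dimensional complex Banach space and Y a complex Banach space containing an isomorphic copy of c₀, and suppose every bounded sequence in the dual Y* admits a weak*-convergent subsequence. Then K(X,Y) contains a complemented copy of c₀. -/
open Filter Topology NormedSpace
open scoped ENNReal

noncomputable section

/-- `ℓ∞` : the Banach space of bounded complex sequences with the sup norm. -/
abbrev LinftySeq : Type := ↥(lp (fun _ : ℕ => ℂ) ∞)

/-- The predicate on `ℓ∞` of belonging to `c₀` (i.e. tending to zero). -/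
def IsC0 (α : LinftySeq) : Prop := Tendsto (fun k => α k) atTop (𝓝 (0 : ℂ))

/-- `c₀` as a (closed) submodule of `ℓ∞`, with the induced sup norm. -/
def c0 : Submodule ℂ LinftySeq where
  carrier := {α | IsC0 α}
  add_mem' := by
    intro a b ha hb
    have := ha.add hb
    simpa [IsC0, lp.coeFn_add] using this
  zero_mem' := by
    simp only [Set.mem_setOf_eq, IsC0, lp.coeFn_zero, Pi.zero_apply]
    exact tendsto_const_nhds
  smul_mem' := by
    intro c a ha
    have := ha.const_mul c
    simpa [IsC0, lp.coeFn_smul, smul_eq_mul] using this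

/-- The subspace `K(X,Y)` of compact operators inside `L(X,Y)`. -/
abbrev KOp (X Y : Type*) [NormedAddCommGroup X] [NormedSpace ℂ X]
    [NormedAddCommGroup Y] [NormedSpace ℂ Y] : Submodule ℂ (X →L[ℂ] Y) :=
  compactOperator (RingHom.id ℂ) X Y

/-- The canonical basis vector `e k` of `c₀`. -/
def eSeq (k : ℕ) : ↥c0 :=
  ⟨lp.single ∞ k (1 : ℂ), by
    have h : ∀ᶠ j in atTop, (lp.single ∞ k (1 : ℂ) : ∀ _ : ℕ, ℂ) j = 0 := by
      filter_upwards [eventually_gt_atTop k] with j hj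
      exact lp.single_apply_ne ∞ k _ (by omega)
    exact Tendsto.congr' (h.mono fun j hj => hj.symm) tendsto_const_nhds⟩

section Helpers

lemma isCompactOperator_smulRight {X Y : Type*} [NormedAddCommGroup X] [NormedSpace ℂ X]
    [NormedAddCommGroup Y] [NormedSpace ℂ Y] (f : X →L[ℂ] ℂ) (y : Y) :
    IsCompactOperator (f.smulRight y) := by
  refine ⟨(fun c : ℂ => c • y) '' Metric.closedBall 0 ‖f‖,
    (isCompact_closedBall (0:ℂ) ‖f‖).image (by fun_prop), ?_⟩
  filter_upwards [Metric.closedBall_mem_nhds (0 : X) one_pos] with x hx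
  refine ⟨f x, ?_, rfl⟩
  simpa [mem_closedBall_zero_iff] using
    (f.le_opNorm x).trans (by nlinarith [mem_closedBall_zero_iff.mp hx, norm_nonneg f])


lemma exists_coord_functional {Y : Type*} [NormedAddCommGroup Y] [NormedSpace ℂ Y]
    (U : ↥c0 →L[ℂ] Y) {c : ℝ} (hc : 0 < c) (hU : ∀ v, c * ‖v‖ ≤ ‖U v‖) (k : ℕ) :
    ∃ g : Y →L[ℂ] ℂ, ‖g‖ ≤ c⁻¹ ∧ ∀ α : ↥c0, g (U α) = (α : LinftySeq) k := by
  have hUinj : Function.Injective U := by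
    intro a b hab
    have h1 : c * ‖a - b‖ ≤ ‖U (a - b)‖ := hU _
    rw [ContinuousLinearMap.map_sub, hab, sub_self, norm_zero] at h1
    have := norm_nonneg (a - b)
    have : ‖a - b‖ = 0 := by nlinarith
    exact sub_eq_zero.mp (norm_eq_zero.mp this)
  set Uₗ := (U : ↥c0 →ₗ[ℂ] Y) with hUₗ
  have hUinj' : Function.Injective Uₗ := hUinj
  set eqv := LinearEquiv.ofInjective Uₗ hUinj' with heqv
  -- coordinate linear map on c0
  set coord : ↥c0 →ₗ[ℂ] ℂ :=
    { toFun := fun α => (α : LinftySeq) k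
      map_add' := by intro a b; simp [lp.coeFn_add]
      map_smul' := by intro m a; simp [lp.coeFn_smul] } with hcoord
  set ψ : ↥(LinearMap.range Uₗ) →ₗ[ℂ] ℂ := coord ∘ₗ (eqv.symm : ↥(LinearMap.range Uₗ) →ₗ[ℂ] ↥c0) with hψ
  have hbound : ∀ y : ↥(LinearMap.range Uₗ), ‖ψ y‖ ≤ c⁻¹ * ‖y‖ := by
    intro y
    set α := eqv.symm y with hα
    have hy : (y : Y) = U α := by
      have : eqv α = y := eqv.apply_symm_apply y
      have := congrArg (Subtype.val) this
      simpa [heqv, hUₗ] using this.symm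
    have h1 : ‖ψ y‖ = ‖(α : LinftySeq) k‖ := rfl
    have h2 : ‖(α : LinftySeq) k‖ ≤ ‖α‖ := lp.norm_apply_le_norm ENNReal.top_ne_zero _ k
    have h3 : c * ‖α‖ ≤ ‖U α‖ := hU α
    have h4 : ‖(y : Y)‖ = ‖U α‖ := by rw [hy]
    have h5 : ‖y‖ = ‖U α‖ := by rw [← h4]; rfl
    rw [h1, h5]
    calc ‖(α : LinftySeq) k‖ ≤ ‖α‖ := h2
    _ = c⁻¹ * (c * ‖α‖) := (inv_mul_cancel_left₀ hc.ne' ‖α‖).symm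
    _ ≤ c⁻¹ * ‖U α‖ := mul_le_mul_of_nonneg_left (hU α) (by positivity)
  set ψC := ψ.mkContinuous c⁻¹ hbound with hψC
  obtain ⟨g, hg_ext, hg_norm⟩ := exists_extension_norm_eq (LinearMap.range Uₗ) ψC
  refine ⟨g, ?_, ?_⟩
  · rw [hg_norm]; exact ψ.mkContinuous_norm_le (by positivity) hbound
  · intro α
    have hmem : U α ∈ LinearMap.range Uₗ := ⟨α, rfl⟩
    have h1 := hg_ext ⟨U α, hmem⟩
    have hsymm : eqv.symm ⟨U α, hmem⟩ = α := by
      rw [LinearEquiv.symm_apply_eq]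
      rfl
    have h2 : ψC ⟨U α, hmem⟩ = (α : LinftySeq) k := by
      show ψ ⟨U α, hmem⟩ = _
      show coord (eqv.symm ⟨U α, hmem⟩) = _
      rw [hsymm]
      rfl
    rw [h1, h2]


open scoped Classical in
def sfun (φ : ℕ → ℕ) (α : ↥c0) (m : ℕ) : ℂ :=
  if h : ∃ k, φ k = m then (α : LinftySeq) h.choose else 0

lemma sfun_apply {φ : ℕ → ℕ} (hφ : StrictMono φ) (α : ↥c0) (k : ℕ) :
    sfun φ α (φ k) = (α : LinftySeq) k := by
  have h : ∃ k', φ k' = φ k := ⟨k, rfl⟩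
  rw [sfun, dif_pos h, hφ.injective h.choose_spec]

lemma sfun_norm_le (φ : ℕ → ℕ) (α : ↥c0) (m : ℕ) : ‖sfun φ α m‖ ≤ ‖α‖ := by
  rw [sfun]
  split
  · exact lp.norm_apply_le_norm ENNReal.top_ne_zero _ _
  · rw [norm_zero]; exact norm_nonneg α

lemma sfun_memℓp (φ : ℕ → ℕ) (α : ↥c0) : Memℓp (sfun φ α) ∞ :=
  memℓp_infty ⟨‖α‖, by rintro x ⟨m, rfl⟩; exact sfun_norm_le φ α m⟩

lemma sfun_tendsto {φ : ℕ → ℕ} (hφ : StrictMono φ) (α : ↥c0) :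
    Tendsto (sfun φ α) atTop (𝓝 (0 : ℂ)) := by
  rw [Metric.tendsto_atTop]
  intro ε hε
  have hα : Tendsto (fun k => (α : LinftySeq) k) atTop (𝓝 (0 : ℂ)) := α.2
  rw [Metric.tendsto_atTop] at hα
  obtain ⟨K, hK⟩ := hα ε hε
  refine ⟨φ K, fun m hm => ?_⟩
  rw [sfun]
  split
  · next h =>
    have hck := h.choose_spec
    have : K ≤ h.choose := by
      by_contra hlt
      push_neg at hlt
      have := hφ hlt
      omega
    simpa using hK _ this
  · simpa using hε

def Sspread {φ : ℕ → ℕ} (hφ : StrictMono φ) : ↥c0 →L[ℂ] ↥c0 := by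
  refine LinearMap.mkContinuous
    { toFun := fun α => (⟨⟨sfun φ α, sfun_memℓp φ α⟩, sfun_tendsto hφ α⟩ : ↥c0)
      map_add' := ?_
      map_smul' := ?_ } 1 ?_
  · intro a b
    apply Subtype.ext
    apply lp.ext
    funext m
    show sfun φ (a + b) m = (((⟨⟨sfun φ a, _⟩, _⟩ : ↥c0) + ⟨⟨sfun φ b, _⟩, _⟩ : ↥c0) : LinftySeq) m
    have : (((⟨⟨sfun φ a, sfun_memℓp φ a⟩, sfun_tendsto hφ a⟩ : ↥c0) + ⟨⟨sfun φ b, sfun_memℓp φ b⟩, sfun_tendsto hφ b⟩ : ↥c0) : LinftySeq) m = sfun φ a m + sfun φ b m := rfl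
    rw [this, sfun, sfun, sfun]
    have hab : ((a + b : ↥c0) : LinftySeq) = (a : LinftySeq) + (b : LinftySeq) := rfl
    split
    · next h => rw [hab]; exact lp.coeFn_add (a:LinftySeq) (b:LinftySeq) ▸ rfl
    · simp
  · intro m a
    apply Subtype.ext
    apply lp.ext
    funext j
    show sfun φ (m • a) j = m • sfun φ a j
    rw [sfun, sfun]
    split
    · rfl
    · simp
  · intro α
    show ‖(⟨⟨sfun φ α, _⟩, _⟩ : ↥c0)‖ ≤ 1 * ‖α‖
    rw [one_mul]
    show ‖(⟨sfun φ α, sfun_memℓp φ α⟩ : LinftySeq)‖ ≤ ‖α‖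
    exact lp.norm_le_of_forall_le (norm_nonneg α) (sfun_norm_le φ α)

lemma Sspread_apply {φ : ℕ → ℕ} (hφ : StrictMono φ) (α : ↥c0) (k : ℕ) :
    ((Sspread hφ α : ↥c0) : LinftySeq) (φ k) = (α : LinftySeq) k := sfun_apply hφ α k

lemma norm_le_Sspread {φ : ℕ → ℕ} (hφ : StrictMono φ) (α : ↥c0) :
    ‖α‖ ≤ ‖Sspread hφ α‖ := by
  have h1 : ∀ k, ‖(α : LinftySeq) k‖ ≤ ‖Sspread hφ α‖ := by
    intro k
    rw [← Sspread_apply hφ α k]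
    exact lp.norm_apply_le_norm ENNReal.top_ne_zero _ _
  exact lp.norm_le_of_forall_le (le_trans (norm_nonneg _) (h1 0)) h1

def Qaux {Y : Type*} [NormedAddCommGroup Y] [NormedSpace ℂ Y] (f : ℕ → Y →L[ℂ] ℂ) {C : ℝ}
    (hC : 0 ≤ C) (hfn : ∀ n, ‖f n‖ ≤ C)
    (hf0 : ∀ v : Y, Tendsto (fun n => f n v) atTop (𝓝 (0 : ℂ))) : Y →L[ℂ] ↥c0 := by
  have hqb : ∀ (v : Y) (k : ℕ), ‖f k v‖ ≤ C * ‖v‖ := fun v k =>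
    ((f k).le_opNorm v).trans (mul_le_mul_of_nonneg_right (hfn k) (norm_nonneg v))
  have hqmem : ∀ v : Y, Memℓp (fun k => f k v) ∞ := fun v =>
    memℓp_infty ⟨C * ‖v‖, by rintro r ⟨k, rfl⟩; exact hqb v k⟩
  refine LinearMap.mkContinuous
    { toFun := fun v => (⟨⟨fun k => f k v, hqmem v⟩, hf0 v⟩ : ↥c0)
      map_add' := ?_
      map_smul' := ?_ } C ?_
  · intro a b
    apply Subtype.ext
    apply lp.ext
    funext k
    show f k (a + b) = _
    rw [map_add]
    rfl
  · intro m a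
    apply Subtype.ext
    apply lp.ext
    funext k
    show f k (m • a) = _
    rw [map_smul]
    rfl
  · intro v
    show ‖(⟨fun k => f k v, hqmem v⟩ : LinftySeq)‖ ≤ C * ‖v‖
    exact lp.norm_le_of_forall_le (by positivity) (hqb v)

lemma Qaux_apply {Y : Type*} [NormedAddCommGroup Y] [NormedSpace ℂ Y] (f : ℕ → Y →L[ℂ] ℂ)
    {C : ℝ} (hC : 0 ≤ C) (hfn : ∀ n, ‖f n‖ ≤ C)
    (hf0 : ∀ v : Y, Tendsto (fun n => f n v) atTop (𝓝 (0 : ℂ))) (v : Y) (k : ℕ) :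
    ((Qaux f hC hfn hf0 v : ↥c0) : LinftySeq) k = f k v := rfl

end Helpers

theorem stmt5 (X Y : Type*) [NormedAddCommGroup X] [NormedSpace ℂ X] [CompleteSpace X]
    [NormedAddCommGroup Y] [NormedSpace ℂ Y] [CompleteSpace Y]
    (hX : ¬ FiniteDimensional ℂ X)
    (hY : ∃ U : ↥c0 →L[ℂ] Y, ∃ c > 0, ∀ v, c * ‖v‖ ≤ ‖U v‖)
    (hw : ∀ y : ℕ → StrongDual ℂ Y, (∃ C : ℝ, ∀ n, ‖y n‖ ≤ C) →
      ∃ φ : ℕ → ℕ, StrictMono φ ∧ ∃ g : StrongDual ℂ Y, ∀ v : Y,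
        Tendsto (fun n => y (φ n) v) atTop (𝓝 (g v))) :
    ∃ j : ↥c0 →L[ℂ] ↥(KOp X Y), (∃ c > 0, ∀ v, c * ‖v‖ ≤ ‖j v‖) ∧
      ∃ Q : ↥(KOp X Y) →L[ℂ] ↥c0, ∀ v, Q (j v) = v := by
  obtain ⟨U, c, hc, hU⟩ := hY
  -- a norm-one vector and dual functional in X
  have hnt : Nontrivial X := by
    by_contra h
    rw [not_nontrivial_iff_subsingleton] at h
    exact hX inferInstance
  obtain ⟨x, hx⟩ := exists_ne (0 : X)
  set x₀ : X := ‖x‖⁻¹ • x with hx₀def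
  have hx₀ : ‖x₀‖ = 1 := by
    rw [hx₀def, norm_smul, norm_inv, norm_norm]
    field_simp [norm_eq_zero.ne.mpr hx]
  have hx₀ne : x₀ ≠ 0 := by
    intro h; rw [h, norm_zero] at hx₀; norm_num at hx₀
  obtain ⟨xs, hxs1, hxs2⟩ := exists_dual_vector ℂ x₀ (norm_ne_zero_iff.mpr hx₀ne)
  have hxsx₀ : xs x₀ = 1 := by rw [hxs2, hx₀]; norm_num
  -- coordinate functionals on Y
  choose g hgnorm hgcoord using fun k => exists_coord_functional U hc hU k
  obtain ⟨φ, hφ, glim, hconv⟩ := hw g ⟨c⁻¹, hgnorm⟩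
  have hglim0 : ∀ α : ↥c0, glim (U α) = 0 := by
    intro α
    have h1 : Tendsto (fun n => g (φ n) (U α)) atTop (𝓝 (glim (U α))) := hconv (U α)
    have h2 : Tendsto (fun n => (α : LinftySeq) (φ n)) atTop (𝓝 (0:ℂ)) :=
      (α.2 : IsC0 (α : LinftySeq)).comp hφ.tendsto_atTop
    have h3 : (fun n => g (φ n) (U α)) = fun n => (α : LinftySeq) (φ n) :=
      funext fun n => hgcoord (φ n) α
    exact tendsto_nhds_unique (h3 ▸ h1) h2
  set f : ℕ → Y →L[ℂ] ℂ := fun n => g (φ n) - glim with hfdef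
  have hf_apply : ∀ n (α : ↥c0), f n (U α) = (α : LinftySeq) (φ n) := by
    intro n α
    show g (φ n) (U α) - glim (U α) = _
    rw [hglim0, hgcoord (φ n) α, sub_zero]
  have hfnorm : ∀ n, ‖f n‖ ≤ c⁻¹ + ‖glim‖ := fun n =>
    (norm_sub_le _ _).trans (add_le_add_left (hgnorm (φ n)) _)
  have hf0 : ∀ v : Y, Tendsto (fun n => f n v) atTop (𝓝 (0:ℂ)) := by
    intro v
    have := (hconv v).sub_const (glim v)
    simpa [hfdef] using this
  set S := Sspread hφ with hSdef
  have hSnorm : ∀ α : ↥c0, ‖S α‖ ≤ ‖α‖ := by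
    intro α
    show ‖(⟨⟨sfun φ α, sfun_memℓp φ α⟩, sfun_tendsto hφ α⟩ : ↥c0)‖ ≤ ‖α‖
    exact lp.norm_le_of_forall_le (norm_nonneg α) (sfun_norm_le φ α)
  -- the embedding j
  set B : ↥c0 →L[ℂ] (X →L[ℂ] Y) :=
    (ContinuousLinearMap.smulRightL ℂ X Y xs).comp (U.comp S) with hB
  have hBval : ∀ α : ↥c0, B α = xs.smulRight (U (S α)) := fun α => rfl
  have hmem : ∀ α : ↥c0, B α ∈ KOp X Y := fun α =>
    isCompactOperator_smulRight xs (U (S α))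
  set j : ↥c0 →L[ℂ] ↥(KOp X Y) := B.codRestrict (KOp X Y) hmem with hjdef
  have hjnorm : ∀ α : ↥c0, ‖j α‖ = ‖U (S α)‖ := by
    intro α
    show ‖B α‖ = _
    rw [hBval, ContinuousLinearMap.norm_smulRight_apply, hxs1, one_mul]
  refine ⟨j, ⟨c, hc, ?_⟩, ?_⟩
  · intro v
    rw [hjnorm]
    calc c * ‖v‖ ≤ c * ‖S v‖ := mul_le_mul_of_nonneg_left (norm_le_Sspread hφ v) hc.le
    _ ≤ ‖U (S v)‖ := hU (S v)
  · -- the projection Q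
    set C := c⁻¹ + ‖glim‖ with hC
    have hC0 : 0 ≤ C := le_trans (norm_nonneg (g (φ 0) - glim)) (hfnorm 0)
    set Q : ↥(KOp X Y) →L[ℂ] ↥c0 :=
      (Qaux f hC0 hfnorm hf0).comp
        ((ContinuousLinearMap.apply ℂ Y x₀).comp (KOp X Y).subtypeL) with hQdef
    refine ⟨Q, ?_⟩
    intro v
    apply Subtype.ext
    apply lp.ext
    funext k
    show f k ((xs.smulRight (U (S v))) x₀) = (v : LinftySeq) k
    rw [ContinuousLinearMap.smulRight_apply, map_smul, hxsx₀, smul_eq_mul, one_mul,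
      hf_apply k (S v), Sspread_apply hφ v k]
end
end

section
/- Let X and Y be complex Banach spaces with X nonzero. If K(X,Y) is complemented in its bidual (there is a bounded linear map Q : K(X,Y)** → K(X,Y) with Q ∘ ι = id, where ι is the canonical embedding of K(X,Y) into its bidual), then Y is complemented in its bidual Y**. -/
open Filter Topology NormedSpace
open scoped ENNReal

noncomputable section

instance KOp.instSeminormedAddCommGroup (X Y : Type*) [NormedAddCommGroup X] [NormedSpace ℂ X]
    [NormedAddCommGroup Y] [NormedSpace ℂ Y] : SeminormedAddCommGroup ↥(KOp X Y) := inferInstance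

instance KOp.instNormedSpace (X Y : Type*) [NormedAddCommGroup X] [NormedSpace ℂ X]
    [NormedAddCommGroup Y] [NormedSpace ℂ Y] : NormedSpace ℂ ↥(KOp X Y) := inferInstance

set_option maxHeartbeats 1000000 in
set_option synthInstance.maxHeartbeats 1000000 in
theorem stmt10 (X Y : Type*) [NormedAddCommGroup X] [NormedSpace ℂ X] [CompleteSpace X]
    [NormedAddCommGroup Y] [NormedSpace ℂ Y] [CompleteSpace Y] [Nontrivial X]
    (hK : ∃ Q : StrongDual ℂ (StrongDual ℂ ↥(KOp X Y)) →L[ℂ] ↥(KOp X Y),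
        ∀ S : ↥(KOp X Y), Q (inclusionInDoubleDual ℂ ↥(KOp X Y) S) = S) :
    ∃ Q₁ : StrongDual ℂ (StrongDual ℂ Y) →L[ℂ] Y, ∀ y : Y, Q₁ (inclusionInDoubleDual ℂ Y y) = y := by
  classical
  obtain ⟨Q, hQ⟩ := hK
  obtain ⟨x₀, hx₀⟩ := exists_ne (0 : X)
  obtain ⟨g, hg1, hgx⟩ := exists_dual_vector ℂ x₀ (norm_ne_zero_iff.mpr hx₀)
  set f : X →L[ℂ] ℂ := (‖x₀‖ : ℂ)⁻¹ • g with hf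
  have hfx : f x₀ = 1 := by
    have hx0 : (‖x₀‖ : ℂ) ≠ 0 := by
      exact_mod_cast norm_ne_zero_iff.mpr hx₀
    simp [hf, hgx, inv_mul_cancel₀ hx0]
  -- rank one operators are compact
  have hcomp : ∀ y : Y, IsCompactOperator (f.smulRight y : X →L[ℂ] Y) := by
    intro y
    rw [isCompactOperator_iff_exists_mem_nhds_image_subset_compact]
    refine ⟨Metric.closedBall 0 1, Metric.closedBall_mem_nhds 0 one_pos,
      (fun c : ℂ => c • y) '' Metric.closedBall 0 ‖f‖,
      ((isCompact_closedBall (0 : ℂ) ‖f‖).image (continuous_id.smul continuous_const)), ?_⟩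
    rintro _ ⟨x, hx, rfl⟩
    refine ⟨f x, ?_, rfl⟩
    simpa [Metric.mem_closedBall, Complex.dist_eq] using
      f.unit_le_opNorm x (by simpa [Metric.mem_closedBall, dist_zero_right] using hx)
  -- the embedding J : Y → K(X,Y)
  let J : Y →L[ℂ] ↥(KOp X Y) :=
    (ContinuousLinearMap.smulRightL ℂ X Y f).codRestrict (KOp X Y) fun y => hcomp y
  -- the projection P : K(X,Y) → Y, evaluation at x₀
  let P : ↥(KOp X Y) →L[ℂ] Y :=
    (ContinuousLinearMap.apply ℂ Y x₀).comp (KOp X Y).subtypeL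
  have hPJ : ∀ y : Y, P (J y) = y := by
    intro y
    show (f.smulRight y) x₀ = y
    simp [hfx]
  -- the transpose of J
  let Jstar : StrongDual ℂ ↥(KOp X Y) →L[ℂ] StrongDual ℂ Y :=
    (ContinuousLinearMap.compL ℂ Y ↥(KOp X Y) ℂ).flip J
  let T : StrongDual ℂ (StrongDual ℂ Y) →L[ℂ] StrongDual ℂ (StrongDual ℂ ↥(KOp X Y)) :=
    (ContinuousLinearMap.compL ℂ (StrongDual ℂ ↥(KOp X Y)) (StrongDual ℂ Y) ℂ).flip Jstar
  have hT : ∀ y : Y, T (inclusionInDoubleDual ℂ Y y)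
      = inclusionInDoubleDual ℂ ↥(KOp X Y) (J y) := by
    intro y
    ext ψ
    rfl
  refine ⟨P.comp (Q.comp T), fun y => ?_⟩
  simp only [ContinuousLinearMap.comp_apply, hT y, hQ (J y), hPJ y]
end
end

section
/- Let X and Y be complex Banach spaces, let (x_k*)_{k≥0} be a sequence in the closed unit ball of X* converging to 0 in the weak* topology (x_k*(x) → 0 for every x ∈ X), and let U : c₀ → Y be a bounded linear map. Then for every α ∈ ℓ∞ and every x ∈ X the series Σ_{k≥0} α_k x_k*(x) U(e_k) converges in Y, the map σ(α) : x ↦ Σ_{k≥0} α_k x_k*(x) U(e_k) is a bounded linear operator from X to Y with ‖σ(α)‖ ≤ ‖U‖·‖α‖_∞, and σ : ℓ∞ → L(X,Y) is a bounded linear map. -/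
open Filter Topology NormedSpace
open scoped ENNReal

noncomputable section

-- key lemma: every c0 element is the sum of its coordinates times basis vectors
lemma hasSum_eSeq (b : ↥c0) :
    HasSum (fun k => ((b : LinftySeq) k) • eSeq k) b := by
  rw [HasSum, SummationFilter.unconditional_filter, Metric.tendsto_atTop]
  intro ε hε
  have hb : Tendsto (fun k => (b : LinftySeq) k) atTop (𝓝 0) := b.2
  obtain ⟨N, hN⟩ := (Metric.tendsto_atTop.mp hb) (ε/2) (half_pos hε)
  refine ⟨Finset.range N, fun s hs => ?_⟩
  rw [dist_eq_norm]
  have hcoe : ((↑(∑ k ∈ s, ((b : LinftySeq) k) • eSeq k) : LinftySeq) : ∀ _ : ℕ, ℂ)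
      = fun j => if j ∈ s then (b : LinftySeq) j else 0 := by
    funext j
    rw [Submodule.coe_sum, lp.coeFn_sum, Finset.sum_apply]
    simp only [lp.coeFn_smul, Pi.smul_apply, smul_eq_mul]
    rw [Finset.sum_congr rfl (fun k _ => by
      show (b : LinftySeq) k * (eSeq k : LinftySeq) j = _
      rw [show ((eSeq k : LinftySeq) : ∀ _ : ℕ, ℂ) j = if j = k then 1 else 0 by
        simp [eSeq, lp.single_apply, Pi.single_apply]])]
    simp [Finset.sum_ite_eq]
  have hnorm : ‖(∑ k ∈ s, ((b : LinftySeq) k) • eSeq k) - b‖ ≤ ε / 2 := by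
    rw [show ‖(∑ k ∈ s, ((b : LinftySeq) k) • eSeq k) - b‖
        = ‖((↑(∑ k ∈ s, ((b : LinftySeq) k) • eSeq k) : LinftySeq) - (b : LinftySeq))‖ from rfl]
    refine lp.norm_le_of_forall_le (by positivity) fun j => ?_
    rw [lp.coeFn_sub, Pi.sub_apply, hcoe]
    by_cases hj : j ∈ s
    · simp [hj]
      positivity
    · simp only [hj, if_false, zero_sub, norm_neg]
      have hjN : N ≤ j := by
        by_contra h
        exact hj (hs (Finset.mem_range.mpr (by omega)))
      have := hN j hjN
      rw [dist_eq_norm, sub_zero] at this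
      exact this.le
  calc ‖(∑ k ∈ s, ((b : LinftySeq) k) • eSeq k) - b‖ ≤ ε/2 := hnorm
    _ < ε := by linarith

section Aux2
variable {X Y : Type*} [NormedAddCommGroup X] [NormedSpace ℂ X]
  [NormedAddCommGroup Y] [NormedSpace ℂ Y]

lemma coordBound (xs : ℕ → StrongDual ℂ X) (hxs : ∀ k, ‖xs k‖ ≤ 1) (α : LinftySeq) (x : X) (k : ℕ) :
    ‖α k * xs k x‖ ≤ ‖α‖ * ‖x‖ := by
  rw [norm_mul]
  have h1 : ‖α k‖ ≤ ‖α‖ := lp.norm_apply_le_norm ENNReal.top_ne_zero α k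
  have h2 : ‖xs k x‖ ≤ ‖x‖ :=
    calc ‖xs k x‖ ≤ ‖xs k‖ * ‖x‖ := (xs k).le_opNorm x
    _ ≤ 1 * ‖x‖ := by gcongr; exact hxs k
    _ = ‖x‖ := one_mul _
  exact mul_le_mul h1 h2 (norm_nonneg _) (norm_nonneg _)

def Bel (xs : ℕ → StrongDual ℂ X) (hxs : ∀ k, ‖xs k‖ ≤ 1)
    (hw : ∀ x : X, Tendsto (fun k => xs k x) atTop (𝓝 (0 : ℂ)))
    (α : LinftySeq) (x : X) : ↥c0 :=
  ⟨⟨fun k => α k * xs k x,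
    memℓp_infty ⟨‖α‖ * ‖x‖, by rintro r ⟨k, rfl⟩; exact coordBound xs hxs α x k⟩⟩, by
    show Tendsto (fun k => α k * xs k x) atTop (𝓝 0)
    rw [tendsto_zero_iff_norm_tendsto_zero]
    refine squeeze_zero (g := fun k => ‖α‖ * ‖xs k x‖) (fun k => norm_nonneg _)
      (fun k => ?_) ?_
    · rw [norm_mul]
      exact mul_le_mul_of_nonneg_right (lp.norm_apply_le_norm ENNReal.top_ne_zero α k)
        (norm_nonneg _)
    · have h := ((hw x).norm.const_mul ‖α‖)
      rw [norm_zero, mul_zero] at h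
      exact h⟩

lemma Bel_coe (xs : ℕ → StrongDual ℂ X) (hxs : ∀ k, ‖xs k‖ ≤ 1)
    (hw : ∀ x : X, Tendsto (fun k => xs k x) atTop (𝓝 (0 : ℂ)))
    (α : LinftySeq) (x : X) (k : ℕ) :
    ((Bel xs hxs hw α x : LinftySeq) : ∀ _ : ℕ, ℂ) k = α k * xs k x := rfl

lemma Bel_norm_le (xs : ℕ → StrongDual ℂ X) (hxs : ∀ k, ‖xs k‖ ≤ 1)
    (hw : ∀ x : X, Tendsto (fun k => xs k x) atTop (𝓝 (0 : ℂ)))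
    (α : LinftySeq) (x : X) : ‖Bel xs hxs hw α x‖ ≤ ‖α‖ * ‖x‖ := by
  show ‖(Bel xs hxs hw α x : LinftySeq)‖ ≤ ‖α‖ * ‖x‖
  exact lp.norm_le_of_forall_le (by positivity) fun k => coordBound xs hxs α x k

variable (xs : ℕ → StrongDual ℂ X) (hxs : ∀ k, ‖xs k‖ ≤ 1)
    (hw : ∀ x : X, Tendsto (fun k => xs k x) atTop (𝓝 (0 : ℂ)))

lemma Bel_add_right (α : LinftySeq) (x y : X) :
    Bel xs hxs hw α (x + y) = Bel xs hxs hw α x + Bel xs hxs hw α y := by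
  refine Subtype.ext (lp.ext (funext fun k => ?_))
  show α k * xs k (x + y) = α k * xs k x + α k * xs k y
  rw [map_add]; ring

lemma Bel_smul_right (α : LinftySeq) (c : ℂ) (x : X) :
    Bel xs hxs hw α (c • x) = c • Bel xs hxs hw α x := by
  refine Subtype.ext (lp.ext (funext fun k => ?_))
  show α k * xs k (c • x) = c * (α k * xs k x)
  rw [map_smul, smul_eq_mul]; ring

lemma Bel_add_left (α β : LinftySeq) (x : X) :
    Bel xs hxs hw (α + β) x = Bel xs hxs hw α x + Bel xs hxs hw β x := by
  refine Subtype.ext (lp.ext (funext fun k => ?_))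
  show (α + β) k * xs k x = α k * xs k x + β k * xs k x
  rw [lp.coeFn_add, Pi.add_apply]; ring

lemma Bel_smul_left (α : LinftySeq) (c : ℂ) (x : X) :
    Bel xs hxs hw (c • α) x = c • Bel xs hxs hw α x := by
  refine Subtype.ext (lp.ext (funext fun k => ?_))
  show (c • α) k * xs k x = c * (α k * xs k x)
  rw [lp.coeFn_smul, Pi.smul_apply, smul_eq_mul]; ring

def sigmaOp (U : ↥c0 →L[ℂ] Y) : LinftySeq →L[ℂ] (X →L[ℂ] Y) :=
  LinearMap.mkContinuous
    { toFun := fun α => LinearMap.mkContinuous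
        { toFun := fun x => U (Bel xs hxs hw α x)
          map_add' := fun x y => by
            show U (Bel xs hxs hw α (x + y)) = U (Bel xs hxs hw α x) + U (Bel xs hxs hw α y)
            rw [Bel_add_right, map_add]
          map_smul' := fun c x => by
            show U (Bel xs hxs hw α (c • x)) = c • U (Bel xs hxs hw α x)
            rw [Bel_smul_right, map_smul]
        }
        (‖U‖ * ‖α‖) (fun x => by
          show ‖U (Bel xs hxs hw α x)‖ ≤ ‖U‖ * ‖α‖ * ‖x‖
          calc ‖U (Bel xs hxs hw α x)‖ ≤ ‖U‖ * ‖Bel xs hxs hw α x‖ := U.le_opNorm _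
          _ ≤ ‖U‖ * (‖α‖ * ‖x‖) := by gcongr; exact Bel_norm_le xs hxs hw α x
          _ = ‖U‖ * ‖α‖ * ‖x‖ := by ring)
      map_add' := fun α β => by
        ext x
        show U (Bel xs hxs hw (α + β) x) = U (Bel xs hxs hw α x) + U (Bel xs hxs hw β x)
        rw [Bel_add_left, map_add]
      map_smul' := fun c α => by
        ext x
        show U (Bel xs hxs hw (c • α) x) = c • U (Bel xs hxs hw α x)
        rw [Bel_smul_left, map_smul] }
    ‖U‖ (fun α => by
      apply LinearMap.mkContinuous_norm_le _ (by positivity)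
      intro x
      show ‖U (Bel xs hxs hw α x)‖ ≤ ‖U‖ * ‖α‖ * ‖x‖
      calc ‖U (Bel xs hxs hw α x)‖ ≤ ‖U‖ * ‖Bel xs hxs hw α x‖ := U.le_opNorm _
      _ ≤ ‖U‖ * (‖α‖ * ‖x‖) := by gcongr; exact Bel_norm_le xs hxs hw α x
      _ = ‖U‖ * ‖α‖ * ‖x‖ := by ring)

lemma sigmaOp_apply (U : ↥c0 →L[ℂ] Y) (α : LinftySeq) (x : X) :
    sigmaOp xs hxs hw U α x = U (Bel xs hxs hw α x) := by
  simp only [sigmaOp, LinearMap.mkContinuous_apply, LinearMap.coe_mk, AddHom.coe_mk]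

lemma sigmaOp_norm_le (U : ↥c0 →L[ℂ] Y) (α : LinftySeq) :
    ‖sigmaOp xs hxs hw U α‖ ≤ ‖U‖ * ‖α‖ := by
  refine ContinuousLinearMap.opNorm_le_bound _ (by positivity) fun x => ?_
  rw [sigmaOp_apply]
  calc ‖U (Bel xs hxs hw α x)‖ ≤ ‖U‖ * ‖Bel xs hxs hw α x‖ := U.le_opNorm _
  _ ≤ ‖U‖ * (‖α‖ * ‖x‖) := by gcongr; exact Bel_norm_le xs hxs hw α x
  _ = ‖U‖ * ‖α‖ * ‖x‖ := by ring

end Aux2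

theorem stmt16 (X Y : Type*) [NormedAddCommGroup X] [NormedSpace ℂ X] [CompleteSpace X]
    [NormedAddCommGroup Y] [NormedSpace ℂ Y] [CompleteSpace Y]
    (xs : ℕ → StrongDual ℂ X) (hxs : ∀ k, ‖xs k‖ ≤ 1)
    (hw : ∀ x : X, Tendsto (fun k => xs k x) atTop (𝓝 (0 : ℂ)))
    (U : ↥c0 →L[ℂ] Y) :
    ∃ σ : LinftySeq →L[ℂ] (X →L[ℂ] Y),
      (∀ (α : LinftySeq) (x : X),
        HasSum (fun k => (α k * xs k x) • U (eSeq k)) (σ α x)) ∧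
      ∀ α : LinftySeq, ‖σ α‖ ≤ ‖U‖ * ‖α‖ := by
  refine ⟨sigmaOp xs hxs hw U, fun α x => ?_, fun α => sigmaOp_norm_le xs hxs hw U α⟩
  rw [sigmaOp_apply]
  have h := (hasSum_eSeq (Bel xs hxs hw α x)).mapL U
  simpa only [map_smul, Bel_coe] using h
end
end

section
/- Let X and Y be complex Banach spaces such that Y does not contain an isomorphic copy of c₀, and let σ₁ : c₀ → K(X,Y) ⊆ L(X,Y) be a bounded linear map. Then for every α ∈ ℓ∞ and every x ∈ X the series Σ_{n≥0} α_n σ₁(e_n)(x) converges in Y, and the formula σ₂(α)(x) = Σ_{n≥0} α_n σ₁(e_n)(x) defines a bounded linear map σ₂ : ℓ∞ → L(X,Y) which extends σ₁, i.e. σ₂(α) = σ₁(α) for all α ∈ c₀. -/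
open Filter Topology NormedSpace
open scoped ENNReal

noncomputable section
set_option maxHeartbeats 2000000
set_option synthInstance.maxHeartbeats 1000000

namespace Stmt19Aux

/-- "measure" of a set under kernel row `a`. -/
def msum (a : ℕ → ℝ≥0∞) (U : Set ℕ) : ℝ≥0∞ := ∑' j, U.indicator a j

lemma msum_mono (a : ℕ → ℝ≥0∞) {U V : Set ℕ} (h : U ⊆ V) : msum a U ≤ msum a V :=
  ENNReal.tsum_le_tsum fun j => Set.indicator_le_indicator_of_subset h (fun _ => zero_le) j

lemma msum_union (a : ℕ → ℝ≥0∞) {U V : Set ℕ} (h : Disjoint U V) :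
    msum a (U ∪ V) = msum a U + msum a V := by
  unfold msum
  rw [← ENNReal.tsum_add]
  congr 1
  ext j
  exact congrFun (Set.indicator_union_of_disjoint h a) j

lemma msum_le_total (a : ℕ → ℝ≥0∞) (U : Set ℕ) : msum a U ≤ ∑' j, a j :=
  ENNReal.tsum_le_tsum fun j => Set.indicator_le_self _ _ j

/-- Rosenthal's lemma, kernel form, by induction on the budget `k`. -/
theorem rosenthal (ε : ℝ≥0∞) (hε : ε ≠ ∞) : ∀ (k : ℕ) (a : ℕ → ℕ → ℝ≥0∞) (E : ℕ → Set ℕ),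
    Pairwise (Function.onFun Disjoint E) → (∀ i, ∑' j, a i j ≤ k * ε) →
    ∃ S : Set ℕ, S.Infinite ∧ ∀ i ∈ S, msum (a i) (⋃ p ∈ S \ {i}, E p) ≤ ε := by
  intro k
  induction k with
  | zero =>
    intro a E _ hrow
    refine ⟨Set.univ, Set.infinite_univ, fun i _ => ?_⟩
    have h0 : msum (a i) (⋃ p ∈ Set.univ \ {i}, E p) ≤ ∑' j, a i j := msum_le_total _ _
    calc msum (a i) _ ≤ ∑' j, a i j := h0
    _ ≤ (0:ℕ) * ε := hrow i
    _ ≤ ε := by simp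
  | succ k IH =>
    intro a E hE hrow
    -- blocks
    set A : ℕ → Set ℕ := fun p => {n | (Nat.unpair n).1 = p} with hA
    have hAinf : ∀ p, (A p).Infinite := by
      intro p
      apply Set.infinite_of_injective_forall_mem (f := fun m => Nat.pair p m)
      · intro m m' hmm
        have := congrArg (fun n => (Nat.unpair n).2) hmm
        simpa using this
      · intro m; simp [hA]
    have hAdisj : ∀ p q, p ≠ q → Disjoint (A p) (A q) := by
      intro p q hpq
      rw [Set.disjoint_left]
      rintro n hn hn'
      exact hpq (hn.symm.trans hn')
    by_cases hcase : ∃ p, {i | i ∈ A p ∧ msum (a i) (⋃ j ∈ A p \ {i}, E j) ≤ ε}.Infinite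
    · obtain ⟨p, hp⟩ := hcase
      refine ⟨_, hp, fun i hi => ?_⟩
      refine le_trans (msum_mono _ ?_) hi.2
      apply Set.iUnion₂_subset
      intro q hq
      exact Set.subset_iUnion₂ (s := fun j _ => E j) q ⟨hq.1.1, hq.2⟩
    · push_neg at hcase
      -- for each p pick a bad index i p
      have hpick : ∀ p, ∃ i, i ∈ A p ∧ ε < msum (a i) (⋃ j ∈ A p \ {i}, E j) := by
        intro p
        have : ((A p) \ {i | i ∈ A p ∧ msum (a i) (⋃ j ∈ A p \ {i}, E j) ≤ ε}).Infinite :=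
          ((hAinf p).diff (hcase p))
        obtain ⟨i, hi⟩ := this.nonempty
        refine ⟨i, hi.1, ?_⟩
        have := hi.2
        simp only [Set.mem_setOf_eq, not_and, not_le] at this
        exact this hi.1
      choose idx hidxA hidxbad using hpick
      have hidxinj : Function.Injective idx := by
        intro p q hpq
        by_contra hne
        exact (hAdisj p q hne).ne_of_mem (hidxA p) (hidxA q) (by rw [hpq])
      set bad : ℕ → Set ℕ := fun p => ⋃ j ∈ A p \ {idx p}, E j with hbad
      set E' : ℕ → Set ℕ := fun p => ⋃ j ∈ A p, E j with hE'
      have hbadsub : ∀ p, bad p ⊆ E' p := by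
        intro p
        apply Set.iUnion₂_subset
        intro j hj
        exact Set.subset_iUnion₂ (s := fun j _ => E j) j hj.1
      have hE'disj : Pairwise (Function.onFun Disjoint E') := by
        intro p q hpq
        simp only [Function.onFun, hE']
        rw [Set.disjoint_iUnion₂_left]
        intro j hj
        rw [Set.disjoint_iUnion₂_right]
        intro j' hj'
        refine hE ?_
        intro hjj'
        exact (hAdisj p q hpq).ne_of_mem hj hj' hjj'
      set a' : ℕ → ℕ → ℝ≥0∞ := fun p => ((bad p)ᶜ).indicator (a (idx p)) with ha'
      have hrow' : ∀ p, ∑' j, a' p j ≤ k * ε := by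
        intro p
        have hsplit : ∑' j, a (idx p) j = msum (a (idx p)) (bad p) + ∑' j, a' p j := by
          have hu := msum_union (a (idx p)) (disjoint_compl_right : Disjoint (bad p) (bad p)ᶜ)
          rw [Set.union_compl_self] at hu
          have huniv : msum (a (idx p)) Set.univ = ∑' j, a (idx p) j := by
            simp [msum]
          rw [huniv] at hu
          exact hu
        have h1 : msum (a (idx p)) (bad p) + ∑' j, a' p j ≤ (k+1 : ℕ) * ε := by
          rw [← hsplit]; exact hrow (idx p)
        have h2 : ε + ∑' j, a' p j ≤ ε + k * ε := by
          calc ε + ∑' j, a' p j ≤ msum (a (idx p)) (bad p) + ∑' j, a' p j :=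
            add_le_add_left (le_of_lt (hidxbad p)) _
          _ ≤ (k+1 : ℕ) * ε := h1
          _ = ε + k * ε := by push_cast; ring
        exact (ENNReal.add_le_add_iff_left hε).mp h2
      obtain ⟨T, hTinf, hT⟩ := IH a' E' hE'disj hrow'
      refine ⟨idx '' T, hTinf.image (Set.injOn_of_injective hidxinj), ?_⟩
      rintro _ ⟨p, hpT, rfl⟩
      have hUsub : (⋃ m ∈ idx '' T \ {idx p}, E m) ⊆ ⋃ q ∈ T \ {p}, E' q := by
        apply Set.iUnion₂_subset
        rintro m ⟨⟨q, hqT, rfl⟩, hmne⟩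
        have hqp : q ≠ p := by rintro rfl; exact hmne rfl
        refine Set.Subset.trans ?_ (Set.subset_iUnion₂ (s := fun q _ => E' q) q ⟨hqT, hqp⟩)
        exact Set.subset_iUnion₂ (s := fun j _ => E j) (idx q) (hidxA q)
      have hdisjbad : Disjoint (⋃ q ∈ T \ {p}, E' q) (bad p) := by
        rw [Set.disjoint_iUnion₂_left]
        intro q hq
        exact Set.disjoint_of_subset_right (hbadsub p) (hE'disj hq.2)
      calc msum (a (idx p)) (⋃ m ∈ idx '' T \ {idx p}, E m)
          ≤ msum (a (idx p)) (⋃ q ∈ T \ {p}, E' q) := msum_mono _ hUsub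
        _ = msum (a' p) (⋃ q ∈ T \ {p}, E' q) := by
            unfold msum
            apply tsum_congr
            intro j
            by_cases hj : j ∈ ⋃ q ∈ T \ {p}, E' q
            · rw [Set.indicator_of_mem hj, Set.indicator_of_mem hj, ha']
              have hnb : j ∈ (bad p)ᶜ := fun hjb => (hdisjbad.ne_of_mem hj hjb) rfl
              simp only []
              rw [Set.indicator_of_mem hnb]
            · rw [Set.indicator_of_notMem hj, Set.indicator_of_notMem hj]
        _ ≤ ε := hT p hpT

theorem rosenthal_diag (a : ℕ → ℕ → ℝ≥0∞) (M : ℝ≥0∞) (hM : M ≠ ∞) (ε : ℝ≥0∞)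
    (hε0 : ε ≠ 0) (hε : ε ≠ ∞) (hrow : ∀ i, ∑' j, a i j ≤ M) :
    ∃ S : Set ℕ, S.Infinite ∧ ∀ i ∈ S, ∑' j, (S \ {i}).indicator (a i) j ≤ ε := by
  obtain ⟨k, hk⟩ := ENNReal.exists_nat_gt (ENNReal.div_lt_top hM hε0).ne
  have hMk : M ≤ (k : ℕ) * ε := by
    have h1 : M / ε * ε = M := ENNReal.div_mul_cancel hε0 hε
    calc M = M / ε * ε := h1.symm
    _ ≤ (k : ℕ) * ε := mul_le_mul_left hk.le _
  have hsing : Pairwise (Function.onFun Disjoint (fun p : ℕ => ({p} : Set ℕ))) := by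
    intro p q hpq
    simpa [Function.onFun] using hpq
  obtain ⟨S, hSinf, hS⟩ := rosenthal ε hε k a _ hsing (fun i => (hrow i).trans hMk)
  refine ⟨S, hSinf, fun i hi => ?_⟩
  have := hS i hi
  rwa [msum, Set.biUnion_of_singleton] at this


/-- Evaluation at coordinate `i` as a linear map on `c0`. -/
def coordLM (i : ℕ) : ↥c0 →ₗ[ℂ] ℂ where
  toFun v := (v : LinftySeq) i
  map_add' a b := by
    show ((↑(a + b) : LinftySeq) : ∀ n, ℂ) i = _
    simp [lp.coeFn_add]
  map_smul' c a := by
    show ((↑(c • a) : LinftySeq) : ∀ n, ℂ) i = _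
    simp [lp.coeFn_smul]

lemma coordLM_eSeq (i k : ℕ) : coordLM i (eSeq k) = if i = k then 1 else 0 := by
  by_cases h : i = k
  · subst h
    simp [coordLM, eSeq, lp.single_apply_self]
  · simp [coordLM, eSeq, lp.single_apply, h]

lemma coordLM_sum (F : Finset ℕ) (c : ℕ → ℂ) (i : ℕ) :
    coordLM i (∑ j ∈ F, c j • eSeq j) = if i ∈ F then c i else 0 := by
  rw [map_sum]
  simp only [map_smul, coordLM_eSeq, smul_eq_mul, mul_ite, mul_one, mul_zero]
  exact Finset.sum_ite_eq F i c

lemma norm_coordLM_le (v : ↥c0) (i : ℕ) : ‖coordLM i v‖ ≤ ‖v‖ :=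
  lp.norm_apply_le_norm ENNReal.top_ne_zero (v : LinftySeq) i

lemma norm_c0_le {C : ℝ} (hC : 0 ≤ C) (v : ↥c0) (h : ∀ i, ‖coordLM i v‖ ≤ C) : ‖v‖ ≤ C :=
  lp.norm_le_of_forall_le hC h

section Helpers
variable {X Y : Type*} [NormedAddCommGroup X] [NormedSpace ℂ X]
  [NormedAddCommGroup Y] [NormedSpace ℂ Y]

omit [NormedSpace ℂ Y] in
lemma norm_tsum_le' {f : ℕ → Y} {y : Y} (hf : HasSum f y) {C : ℝ}
    (h : ∀ K : Finset ℕ, ‖∑ j ∈ K, f j‖ ≤ C) : ‖y‖ ≤ C :=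
  le_of_tendsto (Filter.Tendsto.norm hf) (Filter.Eventually.of_forall h)

lemma exists_sign' (z : ℂ) : ∃ γ : ℂ, ‖γ‖ = 1 ∧ γ * z = ‖z‖ := by
  by_cases h : z = 0
  · exact ⟨1, by simp [h]⟩
  · refine ⟨(‖z‖ : ℂ) / z, ?_, ?_⟩
    · rw [norm_div, Complex.norm_real, norm_norm, div_self (norm_ne_zero_iff.mpr h)]
    · field_simp

lemma key_identity (σ₁ : ↥c0 →L[ℂ] (X →L[ℂ] Y)) (x : X) (F : Finset ℕ) (c : ℕ → ℂ) :
    ∑ j ∈ F, c j • (σ₁ (eSeq j)) x = (σ₁ (∑ j ∈ F, c j • eSeq j)) x := by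
  rw [map_sum, ContinuousLinearMap.sum_apply]
  refine Finset.sum_congr rfl fun j _ => ?_
  rw [map_smul, ContinuousLinearMap.smul_apply]

lemma norm_sum_eSeq_le (F : Finset ℕ) (c : ℕ → ℂ) {C : ℝ} (hC : 0 ≤ C)
    (h : ∀ j ∈ F, ‖c j‖ ≤ C) : ‖∑ j ∈ F, c j • eSeq j‖ ≤ C := by
  refine norm_c0_le hC _ fun i => ?_
  rw [coordLM_sum]
  by_cases hi : i ∈ F
  · rw [if_pos hi]; exact h i hi
  · rw [if_neg hi]; simpa using hC

lemma keyBound (σ₁ : ↥c0 →L[ℂ] (X →L[ℂ] Y)) (x : X) (F : Finset ℕ) (c : ℕ → ℂ) {C : ℝ}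
    (hC : 0 ≤ C) (h : ∀ j ∈ F, ‖c j‖ ≤ C) :
    ‖∑ j ∈ F, c j • (σ₁ (eSeq j)) x‖ ≤ ‖σ₁‖ * C * ‖x‖ := by
  rw [key_identity]
  calc ‖(σ₁ (∑ j ∈ F, c j • eSeq j)) x‖ ≤ ‖σ₁ (∑ j ∈ F, c j • eSeq j)‖ * ‖x‖ :=
        ContinuousLinearMap.le_opNorm _ _
  _ ≤ (‖σ₁‖ * ‖∑ j ∈ F, c j • eSeq j‖) * ‖x‖ := by
      gcongr
      exact ContinuousLinearMap.le_opNorm _ _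
  _ ≤ ‖σ₁‖ * C * ‖x‖ :=
      mul_le_mul_of_nonneg_right
        (mul_le_mul_of_nonneg_left (norm_sum_eSeq_le F c hC h) (norm_nonneg σ₁))
        (norm_nonneg x)

lemma summable_key [CompleteSpace Y]
    (hY : ¬ ∃ j : ↥c0 →L[ℂ] Y, ∃ c > 0, ∀ v, c * ‖v‖ ≤ ‖j v‖)
    (σ₁ : ↥c0 →L[ℂ] (X →L[ℂ] Y)) (α : LinftySeq) (x : X) :
    Summable (fun n => α n • (σ₁ (eSeq n)) x) := by
  classical
  set f : ℕ → Y := fun n => α n • (σ₁ (eSeq n)) x with hf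
  set M : ℝ := ‖σ₁‖ * ‖α‖ * ‖x‖ with hMdef
  have hM0 : 0 ≤ M := by positivity
  have hα : ∀ i : ℕ, ‖α i‖ ≤ ‖α‖ := fun i => lp.norm_apply_le_norm ENNReal.top_ne_zero α i
  by_contra hns
  rw [summable_iff_vanishing_norm] at hns
  push_neg at hns
  obtain ⟨ε, hε, hchoice⟩ := hns
  choose t ht hεt using hchoice
  -- disjoint blocks
  set acc : ℕ → Finset ℕ := fun k => Nat.rec ∅ (fun _ s => s ∪ t s) k with hacc
  set G : ℕ → Finset ℕ := fun k => t (acc k) with hG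
  have haccsucc : ∀ k, acc (k + 1) = acc k ∪ G k := fun k => rfl
  have haccmono : ∀ {m k : ℕ}, m ≤ k → acc m ⊆ acc k := by
    intro m k h
    induction h with
    | refl => exact Finset.Subset.refl _
    | step _ ih => exact ih.trans (by rw [haccsucc]; exact Finset.subset_union_left)
  have hGacc : ∀ {m k : ℕ}, m < k → G m ⊆ acc k := by
    intro m k h
    refine Finset.Subset.trans ?_ (haccmono h)
    rw [haccsucc]
    exact Finset.subset_union_right
  have hGdisj : ∀ {m k : ℕ}, m ≠ k → Disjoint (G m) (G k) := by
    have key : ∀ {m k : ℕ}, m < k → Disjoint (G m) (G k) := by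
      intro m k h
      exact Finset.disjoint_of_subset_left (hGacc h) (ht (acc k)).symm
    intro m k h
    rcases h.lt_or_gt with h' | h'
    · exact key h'
    · exact (key h').symm
  set v : ℕ → Y := fun k => ∑ j ∈ G k, f j with hv
  have hvε : ∀ k, ε ≤ ‖v k‖ := fun k => hεt (acc k)
  -- uniform bound on blocks of blocks
  have blockBound : ∀ (K : Finset ℕ) (γ : ℕ → ℂ) (C : ℝ), 0 ≤ C → (∀ k ∈ K, ‖γ k‖ ≤ C) →
      ‖∑ k ∈ K, γ k • v k‖ ≤ M * C := by
    intro K γ C hC hγ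
    set u : ℕ → ↥c0 := fun k => ∑ j ∈ G k, (α j : ℂ) • eSeq j with hu
    have hvk : ∀ k, v k = (σ₁ (u k)) x := fun k => key_identity σ₁ x (G k) (fun j => α j)
    have hsum1 : ∑ k ∈ K, γ k • v k = (σ₁ (∑ k ∈ K, γ k • u k)) x := by
      rw [map_sum, ContinuousLinearMap.sum_apply]
      refine Finset.sum_congr rfl fun k _ => ?_
      rw [hvk, map_smul, ContinuousLinearMap.smul_apply]
    rw [hsum1]
    have hterm : ∀ (i k : ℕ), coordLM i (γ k • u k) = γ k * (if i ∈ G k then (α i : ℂ) else 0) := by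
      intro i k
      rw [map_smul, hu, coordLM_sum]
      rfl
    have hU : ‖∑ k ∈ K, γ k • u k‖ ≤ C * ‖α‖ := by
      refine norm_c0_le (by positivity) _ fun i => ?_
      rw [map_sum]
      by_cases hex : ∃ k ∈ K, i ∈ G k
      · obtain ⟨k₀, hk₀K, hk₀⟩ := hex
        have heq : ∑ k ∈ K, coordLM i (γ k • u k) = γ k₀ * α i := by
          rw [Finset.sum_eq_single_of_mem k₀ hk₀K]
          · rw [hterm, if_pos hk₀]
          · intro k hkK hkne
            rw [hterm]
            have hnm : i ∉ G k := fun hik =>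
              (Finset.disjoint_left.mp (hGdisj hkne)) hik hk₀
            rw [if_neg hnm, mul_zero]
        rw [heq, norm_mul]
        exact mul_le_mul (hγ k₀ hk₀K) (hα i) (norm_nonneg _) hC
      · push_neg at hex
        have heq : ∑ k ∈ K, coordLM i (γ k • u k) = 0 :=
          Finset.sum_eq_zero fun k hk => by rw [hterm, if_neg (hex k hk), mul_zero]
        rw [heq, norm_zero]
        positivity
    calc ‖(σ₁ (∑ k ∈ K, γ k • u k)) x‖
        ≤ ‖σ₁ (∑ k ∈ K, γ k • u k)‖ * ‖x‖ := ContinuousLinearMap.le_opNorm _ _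
      _ ≤ (‖σ₁‖ * ‖∑ k ∈ K, γ k • u k‖) * ‖x‖ :=
          mul_le_mul_of_nonneg_right (ContinuousLinearMap.le_opNorm _ _) (norm_nonneg x)
      _ ≤ (‖σ₁‖ * (C * ‖α‖)) * ‖x‖ :=
          mul_le_mul_of_nonneg_right
            (mul_le_mul_of_nonneg_left hU (norm_nonneg σ₁)) (norm_nonneg x)
      _ = M * C := by rw [hMdef]; ring
  -- dual functionals
  have hvne : ∀ k, v k ≠ 0 := by
    intro k hk
    have := hvε k
    rw [hk, norm_zero] at this
    linarith
  have hdual : ∀ k, ∃ g : Y →L[ℂ] ℂ, ‖g‖ = 1 ∧ g (v k) = ‖v k‖ := fun k =>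
    exists_dual_vector ℂ (v k) (norm_ne_zero_iff.mpr (hvne k))
  choose g hg1 hgv using hdual
  -- row bounds
  have hrowfin : ∀ (i : ℕ) (K : Finset ℕ), ∑ k ∈ K, ‖(g i) (v k)‖ ≤ M := by
    intro i K
    choose γ hγ1 hγmul using fun k => exists_sign' ((g i) (v k))
    have hsum : ((∑ k ∈ K, ‖(g i) (v k)‖ : ℝ) : ℂ) = (g i) (∑ k ∈ K, γ k • v k) := by
      rw [map_sum]
      push_cast
      refine Finset.sum_congr rfl fun k _ => ?_
      rw [map_smul, smul_eq_mul, hγmul k]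
    have habs : ∑ k ∈ K, ‖(g i) (v k)‖ = ‖(g i) (∑ k ∈ K, γ k • v k)‖ := by
      rw [← hsum, Complex.norm_real, Real.norm_eq_abs, abs_of_nonneg]
      exact Finset.sum_nonneg fun k _ => norm_nonneg _
    rw [habs]
    calc ‖(g i) (∑ k ∈ K, γ k • v k)‖ ≤ ‖g i‖ * ‖∑ k ∈ K, γ k • v k‖ :=
        ContinuousLinearMap.le_opNorm _ _
      _ ≤ 1 * (M * 1) := by
          rw [hg1]
          exact mul_le_mul_of_nonneg_left
            (blockBound K γ 1 zero_le_one fun k _ => le_of_eq (hγ1 k)) zero_le_one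
      _ = M := by ring
  have hrow : ∀ i, ∑' k, (‖(g i) (v k)‖₊ : ℝ≥0∞) ≤ ENNReal.ofReal M := by
    intro i
    rw [ENNReal.tsum_eq_iSup_sum]
    refine iSup_le fun K => ?_
    have heq : ∑ k ∈ K, (‖(g i) (v k)‖₊ : ℝ≥0∞) = ENNReal.ofReal (∑ k ∈ K, ‖(g i) (v k)‖) := by
      rw [ENNReal.ofReal_sum_of_nonneg fun _ _ => norm_nonneg _]
      exact Finset.sum_congr rfl fun k _ => (ofReal_norm _).symm
    rw [heq]
    exact ENNReal.ofReal_le_ofReal (hrowfin i K)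
  -- Rosenthal
  obtain ⟨S, hSinf, hS⟩ := rosenthal_diag (fun i j => (‖(g i) (v j)‖₊ : ℝ≥0∞))
    (ENNReal.ofReal M) ENNReal.ofReal_ne_top (ENNReal.ofReal (ε / 4))
    (by
      have : 0 < ENNReal.ofReal (ε / 4) := ENNReal.ofReal_pos.mpr (by linarith)
      exact this.ne')
    ENNReal.ofReal_ne_top hrow
  set κ : ℕ → ℕ := fun i => ((Set.Infinite.natEmbedding S hSinf) i : ℕ) with hκ
  have hκinj : Function.Injective κ := fun a b h =>
    (Set.Infinite.natEmbedding S hSinf).injective (Subtype.ext h)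
  have hκS : ∀ i, κ i ∈ S := fun i => ((Set.Infinite.natEmbedding S hSinf) i).2
  -- off-diagonal bound along the subsequence
  have hoff : ∀ (i₀ : ℕ) (K : Finset ℕ), ∑ i ∈ K.erase i₀, ‖(g (κ i₀)) (v (κ i))‖ ≤ ε / 4 := by
    intro i₀ K
    have h2 : ∑ i ∈ K.erase i₀, (‖(g (κ i₀)) (v (κ i))‖₊ : ℝ≥0∞) ≤ ENNReal.ofReal (ε / 4) := by
      have h1 : ∀ i ∈ K.erase i₀, (‖(g (κ i₀)) (v (κ i))‖₊ : ℝ≥0∞) =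
          (S \ {κ i₀}).indicator (fun j => (‖(g (κ i₀)) (v j)‖₊ : ℝ≥0∞)) (κ i) := by
        intro i hi
        have hne : κ i ≠ κ i₀ := fun h => (Finset.ne_of_mem_erase hi) (hκinj h)
        rw [Set.indicator_of_mem (Set.mem_diff_singleton.mpr ⟨hκS i, hne⟩)]
      rw [Finset.sum_congr rfl h1]
      calc ∑ i ∈ K.erase i₀,
            (S \ {κ i₀}).indicator (fun j => (‖(g (κ i₀)) (v j)‖₊ : ℝ≥0∞)) (κ i)
          ≤ ∑' i, (S \ {κ i₀}).indicator (fun j => (‖(g (κ i₀)) (v j)‖₊ : ℝ≥0∞)) (κ i) :=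
            ENNReal.sum_le_tsum _
        _ ≤ ∑' j, (S \ {κ i₀}).indicator (fun j => (‖(g (κ i₀)) (v j)‖₊ : ℝ≥0∞)) j :=
            ENNReal.tsum_comp_le_tsum_of_injective hκinj _
        _ ≤ ENNReal.ofReal (ε / 4) := hS (κ i₀) (hκS i₀)
    have h3 : ENNReal.ofReal (∑ i ∈ K.erase i₀, ‖(g (κ i₀)) (v (κ i))‖) ≤
        ENNReal.ofReal (ε / 4) := by
      rw [ENNReal.ofReal_sum_of_nonneg fun _ _ => norm_nonneg _]
      calc ∑ i ∈ K.erase i₀, ENNReal.ofReal ‖(g (κ i₀)) (v (κ i))‖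
          = ∑ i ∈ K.erase i₀, (‖(g (κ i₀)) (v (κ i))‖₊ : ℝ≥0∞) :=
            Finset.sum_congr rfl fun i _ => ofReal_norm _
        _ ≤ ENNReal.ofReal (ε / 4) := h2
    exact (ENNReal.ofReal_le_ofReal_iff (by linarith)).mp h3
  -- finite partial sum bound for the embedding
  have hfinB : ∀ (β : ↥c0) (K : Finset ℕ) (C : ℝ), 0 ≤ C → (∀ i ∈ K, ‖coordLM i β‖ ≤ C) →
      ‖∑ i ∈ K, coordLM i β • v (κ i)‖ ≤ M * C := by
    intro β K C hC hb
    set γ : ℕ → ℂ := Function.extend κ (fun i => coordLM i β) 0 with hγ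
    have h1 : ∑ i ∈ K, coordLM i β • v (κ i) = ∑ m ∈ K.image κ, γ m • v m := by
      rw [Finset.sum_image fun a _ b _ h => hκinj h]
      refine Finset.sum_congr rfl fun i _ => ?_
      rw [hγ, Function.Injective.extend_apply hκinj]
    rw [h1]
    refine blockBound _ γ C hC fun m hm => ?_
    obtain ⟨i, hiK, rfl⟩ := Finset.mem_image.mp hm
    rw [hγ, Function.Injective.extend_apply hκinj]
    exact hb i hiK
  -- summability of the image series
  have hsummB : ∀ β : ↥c0, Summable fun i => coordLM i β • v (κ i) := by
    intro β
    rw [summable_iff_vanishing_norm]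
    intro δ hδ
    have hβ0 : Tendsto (fun i => ‖coordLM i β‖) atTop (𝓝 0) := by
      have h0 : Tendsto (fun i => coordLM i β) atTop (𝓝 (0 : ℂ)) := β.2
      simpa using h0.norm
    obtain ⟨N, hN⟩ := (Metric.tendsto_atTop.mp hβ0) (δ / (2 * (M + 1))) (by positivity)
    refine ⟨Finset.range N, fun K hK => ?_⟩
    have hbound : ∀ i ∈ K, ‖coordLM i β‖ ≤ δ / (2 * (M + 1)) := by
      intro i hiK
      have hiN : N ≤ i := by
        by_contra hlt
        exact (Finset.disjoint_left.mp hK) hiK (Finset.mem_range.mpr (by omega))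
      have := hN i hiN
      rw [Real.dist_eq, sub_zero] at this
      exact le_of_lt (lt_of_le_of_lt (le_abs_self _) this)
    calc ‖∑ i ∈ K, coordLM i β • v (κ i)‖ ≤ M * (δ / (2 * (M + 1))) :=
        hfinB β K _ (by positivity) hbound
      _ < δ := by
          rw [div_eq_inv_mul, ← mul_assoc]
          have h1 : M * (2 * (M + 1))⁻¹ < 1 := by
            rw [mul_inv_lt_iff₀ (by positivity)]
            nlinarith
          nlinarith
  -- the embedding
  set jfun : ↥c0 → Y := fun β => ∑' i, coordLM i β • v (κ i) with hjfun
  have jadd : ∀ β β', jfun (β + β') = jfun β + jfun β' := by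
    intro β β'
    rw [hjfun]
    simp only []
    rw [← Summable.tsum_add (hsummB β) (hsummB β')]
    exact tsum_congr fun i => by rw [map_add, add_smul]
  have jsmul : ∀ (c : ℂ) (β : ↥c0), jfun (c • β) = c • jfun β := by
    intro c β
    rw [hjfun]
    simp only []
    rw [← Summable.tsum_const_smul c (hsummB β)]
    exact tsum_congr fun i => by rw [map_smul, smul_eq_mul, mul_smul]
  set jlin : ↥c0 →ₗ[ℂ] Y :=
    { toFun := jfun, map_add' := jadd, map_smul' := jsmul } with hjlin
  have jbound : ∀ β, ‖jlin β‖ ≤ M * ‖β‖ := fun β =>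
    norm_tsum_le' (hsummB β).hasSum fun K =>
      hfinB β K ‖β‖ (norm_nonneg β) fun i _ => norm_coordLM_le β i
  set jc : ↥c0 →L[ℂ] Y := LinearMap.mkContinuous jlin M jbound with hjc
  apply hY
  refine ⟨jc, ε / 2, by linarith, fun β => ?_⟩
  by_cases hβ : β = 0
  · simp [hβ]
  · have hβpos : 0 < ‖β‖ := norm_pos_iff.mpr hβ
    -- a near-maximal coordinate
    have hnorm : ‖β‖ = ⨆ i, ‖coordLM i β‖ := lp.norm_eq_ciSup (β : LinftySeq)
    have hbdd : BddAbove (Set.range fun i => ‖coordLM i β‖) :=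
      Memℓp.bddAbove (lp.memℓp (β : LinftySeq))
    obtain ⟨i₀, hi₀⟩ : ∃ i₀, 3 / 4 * ‖β‖ < ‖coordLM i₀ β‖ := by
      have hlt : 3 / 4 * ‖β‖ < ⨆ i, ‖coordLM i β‖ := by
        rw [← hnorm]; linarith
      exact (lt_ciSup_iff hbdd).mp hlt
    set h : ℕ → ℂ := fun i => coordLM i β * (g (κ i₀)) (v (κ i)) with hh
    have hjcβ : jc β = ∑' i, coordLM i β • v (κ i) := rfl
    have hsummh : Summable h := by
      have h1 := ((g (κ i₀)).summable (hsummB β))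
      refine h1.congr fun i => ?_
      rw [map_smul, smul_eq_mul]
    have happ : (g (κ i₀)) (jc β) = ∑' i, h i := by
      rw [hjcβ, ContinuousLinearMap.map_tsum _ (hsummB β)]
      exact tsum_congr fun i => by rw [map_smul, smul_eq_mul]
    have hsummh' : Summable fun i => if i = i₀ then 0 else h i := by
      have heq : (fun i => if i = i₀ then 0 else h i) =
          fun i => h i - if i = i₀ then h i₀ else 0 := by
        funext i
        by_cases hi : i = i₀
        · subst hi; simp
        · simp [hi]
      rw [heq]
      exact hsummh.sub (hasSum_ite_eq i₀ (h i₀)).summable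
    have hsplit : ∑' i, h i = h i₀ + ∑' i, if i = i₀ then 0 else h i :=
      Summable.tsum_eq_add_tsum_ite hsummh i₀
    have hrest : ‖∑' i, if i = i₀ then 0 else h i‖ ≤ ‖β‖ * (ε / 4) := by
      refine norm_tsum_le' hsummh'.hasSum fun K => ?_
      calc ‖∑ i ∈ K, if i = i₀ then 0 else h i‖
          ≤ ∑ i ∈ K, ‖if i = i₀ then 0 else h i‖ := norm_sum_le _ _
        _ = ∑ i ∈ K.erase i₀, ‖if i = i₀ then 0 else h i‖ :=
            (Finset.sum_erase K (by simp)).symm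
        _ = ∑ i ∈ K.erase i₀, ‖h i‖ := by
            refine Finset.sum_congr rfl fun i hi => ?_
            rw [if_neg (Finset.ne_of_mem_erase hi)]
        _ ≤ ∑ i ∈ K.erase i₀, ‖β‖ * ‖(g (κ i₀)) (v (κ i))‖ := by
            refine Finset.sum_le_sum fun i _ => ?_
            rw [hh]
            simp only []
            rw [norm_mul]
            exact mul_le_mul_of_nonneg_right (norm_coordLM_le β i) (norm_nonneg _)
        _ = ‖β‖ * ∑ i ∈ K.erase i₀, ‖(g (κ i₀)) (v (κ i))‖ := by rw [Finset.mul_sum]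
        _ ≤ ‖β‖ * (ε / 4) :=
            mul_le_mul_of_nonneg_left (hoff i₀ K) (norm_nonneg β)
    have hmain : ‖h i₀‖ - ‖β‖ * (ε / 4) ≤ ‖jc β‖ := by
      have h1 : ‖(g (κ i₀)) (jc β)‖ ≤ ‖jc β‖ := by
        calc ‖(g (κ i₀)) (jc β)‖ ≤ ‖g (κ i₀)‖ * ‖jc β‖ := ContinuousLinearMap.le_opNorm _ _
          _ = ‖jc β‖ := by rw [hg1, one_mul]
      have h2 : ‖h i₀‖ ≤ ‖(g (κ i₀)) (jc β)‖ + ‖∑' i, if i = i₀ then 0 else h i‖ := by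
        rw [happ, hsplit]
        calc ‖h i₀‖ = ‖(h i₀ + ∑' i, if i = i₀ then 0 else h i) +
              (-(∑' i, if i = i₀ then 0 else h i))‖ := by ring_nf
          _ ≤ ‖h i₀ + ∑' i, if i = i₀ then 0 else h i‖ +
              ‖∑' i, if i = i₀ then 0 else h i‖ := by
                rw [← norm_neg (∑' i, if i = i₀ then 0 else h i)]
                exact norm_add_le _ _
      linarith
    have hhi₀ : 3 / 4 * ‖β‖ * ε ≤ ‖h i₀‖ := by
      rw [hh]
      simp only []
      rw [norm_mul, hgv, Complex.norm_real, Real.norm_eq_abs, abs_of_nonneg (norm_nonneg _)]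
      exact mul_le_mul (le_of_lt hi₀) (hvε (κ i₀)) (by linarith) (norm_nonneg _)
    calc ε / 2 * ‖β‖ = 3 / 4 * ‖β‖ * ε - ‖β‖ * (ε / 4) := by ring
      _ ≤ ‖h i₀‖ - ‖β‖ * (ε / 4) := by linarith
      _ ≤ ‖jc β‖ := hmain


end Helpers

end Stmt19Aux

theorem stmt19 (X Y : Type*) [NormedAddCommGroup X] [NormedSpace ℂ X] [CompleteSpace X]
    [NormedAddCommGroup Y] [NormedSpace ℂ Y] [CompleteSpace Y]
    (hY : ¬ ∃ j : ↥c0 →L[ℂ] Y, ∃ c > 0, ∀ v, c * ‖v‖ ≤ ‖j v‖)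
    (σ₁ : ↥c0 →L[ℂ] (X →L[ℂ] Y)) (hσ₁ : ∀ v : ↥c0, IsCompactOperator ⇑(σ₁ v)) :
    ∃ σ₂ : LinftySeq →L[ℂ] (X →L[ℂ] Y),
      (∀ (α : LinftySeq) (x : X),
        HasSum (fun n => α n • (σ₁ (eSeq n)) x) (σ₂ α x)) ∧
      ∀ v : ↥c0, σ₂ (v : LinftySeq) = σ₁ v := by
  classical
  have hsum : ∀ (α : LinftySeq) (x : X), Summable fun n => α n • (σ₁ (eSeq n)) x :=
    fun α x => Stmt19Aux.summable_key hY σ₁ α x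
  have hbound : ∀ (α : LinftySeq) (x : X),
      ‖∑' n, α n • (σ₁ (eSeq n)) x‖ ≤ ‖σ₁‖ * ‖α‖ * ‖x‖ := by
    intro α x
    refine Stmt19Aux.norm_tsum_le' (hsum α x).hasSum fun K => ?_
    exact Stmt19Aux.keyBound σ₁ x K (fun n => α n) (norm_nonneg α)
      fun j _ => lp.norm_apply_le_norm ENNReal.top_ne_zero α j
  set T : LinftySeq → (X →L[ℂ] Y) := fun α => LinearMap.mkContinuous
    { toFun := fun x => ∑' n, α n • (σ₁ (eSeq n)) x
      map_add' := fun x x' => by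
        rw [← Summable.tsum_add (hsum α x) (hsum α x')]
        exact tsum_congr fun n => by rw [map_add, smul_add]
      map_smul' := fun c x => by
        simp only [RingHom.id_apply]
        rw [← Summable.tsum_const_smul c (hsum α x)]
        exact tsum_congr fun n => by rw [map_smul, smul_comm] }
    (‖σ₁‖ * ‖α‖) (fun x => hbound α x) with hT
  have hTapply : ∀ α x, T α x = ∑' n, α n • (σ₁ (eSeq n)) x := fun α x => rfl
  set σ₂lin : LinftySeq →ₗ[ℂ] (X →L[ℂ] Y) :=
    { toFun := T
      map_add' := fun α α' => by
        ext x
        rw [ContinuousLinearMap.add_apply, hTapply, hTapply, hTapply,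
          ← Summable.tsum_add (hsum α x) (hsum α' x)]
        refine tsum_congr fun n => ?_
        have hc : (α + α') n = α n + α' n := by rw [lp.coeFn_add]; rfl
        rw [hc, add_smul]
      map_smul' := fun c α => by
        ext x
        simp only [RingHom.id_apply]
        rw [ContinuousLinearMap.smul_apply, hTapply, hTapply,
          ← Summable.tsum_const_smul c (hsum α x)]
        refine tsum_congr fun n => ?_
        have hc : (c • α) n = c * α n := by rw [lp.coeFn_smul]; rfl
        rw [hc, ← smul_smul] } with hσ₂lin
  have hσ₂bound : ∀ α, ‖σ₂lin α‖ ≤ ‖σ₁‖ * ‖α‖ := fun α =>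
    LinearMap.mkContinuous_norm_le _ (by positivity) (fun x => hbound α x)
  refine ⟨LinearMap.mkContinuous σ₂lin ‖σ₁‖ hσ₂bound, fun α x => ?_, fun v => ?_⟩
  · exact (hsum α x).hasSum
  · ext x
    have h1 : Tendsto (fun N => ∑ n ∈ Finset.range N, (v : LinftySeq) n • (σ₁ (eSeq n)) x)
        atTop (𝓝 (∑' n, (v : LinftySeq) n • (σ₁ (eSeq n)) x)) :=
      (hsum (v : LinftySeq) x).hasSum.tendsto_sum_nat
    set trunc : ℕ → ↥c0 :=
      fun N => ∑ n ∈ Finset.range N, Stmt19Aux.coordLM n v • eSeq n with htrunc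
    have htr : Tendsto trunc atTop (𝓝 v) := by
      rw [NormedAddCommGroup.tendsto_atTop]
      intro δ hδ
      have hv0 : Tendsto (fun i => ‖Stmt19Aux.coordLM i v‖) atTop (𝓝 0) := by
        have h0 : Tendsto (fun i => Stmt19Aux.coordLM i v) atTop (𝓝 (0 : ℂ)) := v.2
        simpa using h0.norm
      obtain ⟨N₀, hN₀⟩ := (Metric.tendsto_atTop.mp hv0) (δ / 2) (by linarith)
      refine ⟨N₀, fun N hN => ?_⟩
      have hle : ‖trunc N - v‖ ≤ δ / 2 := by
        refine Stmt19Aux.norm_c0_le (by linarith) _ fun i => ?_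
        rw [map_sub, Stmt19Aux.coordLM_sum]
        by_cases hi : i ∈ Finset.range N
        · rw [if_pos hi, sub_self, norm_zero]; linarith
        · rw [if_neg hi, zero_sub, norm_neg]
          have hiN : N₀ ≤ i := le_trans hN (Nat.le_of_not_lt fun hlt => hi (Finset.mem_range.mpr hlt))
          have := hN₀ i hiN
          rw [Real.dist_eq, sub_zero] at this
          exact le_of_lt (lt_of_le_of_lt (le_abs_self _) (by linarith [this]))
      linarith [hle]
    have hcont : Continuous fun u : ↥c0 => (σ₁ u) x :=
      ((ContinuousLinearMap.apply ℂ Y x).comp σ₁).continuous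
    have h2 : Tendsto (fun N => (σ₁ (trunc N)) x) atTop (𝓝 ((σ₁ v) x)) :=
      ((hcont.tendsto v).comp htr)
    have heq : ∀ N, ∑ n ∈ Finset.range N, (v : LinftySeq) n • (σ₁ (eSeq n)) x =
        (σ₁ (trunc N)) x := fun N =>
      Stmt19Aux.key_identity σ₁ x (Finset.range N) (fun n => Stmt19Aux.coordLM n v)
    have h1' : Tendsto (fun N => (σ₁ (trunc N)) x) atTop
        (𝓝 (∑' n, (v : LinftySeq) n • (σ₁ (eSeq n)) x)) := by
      refine h1.congr fun N => heq N
    exact tendsto_nhds_unique h1' h2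
end
end
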